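/- Let 𝔤 = 𝔤^{−1}_{4.8} be the 4-dimensional real Lie algebra with basis e₁,...,e₄ and nonzero brackets [e₂,e₃] = e₁, [e₂,e₄] = e₂, [e₃,e₄] = −e₃. A 4×4 real matrix R equals η·Id + D for some η ∈ ℝ and some derivation D of 𝔤 if and only if R₂₁ = R₃₁ = R₄₁ = 0, R₃₂ = R₂₃ = R₄₂ = R₄₃ = 0, R₂₄ = R₁₃, R₃₄ = R₁₂, and R₄₄ = R₂₂ + R₃₃ − R₁₁. In this case η = R₄₄. -/

import Mathlib

open Matrix

/-- The Lie bracket of the Lie algebra, in coordinates. -/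
def br (x y : Fin 4 → ℝ) : Fin 4 → ℝ :=
  ![(x 1 * y 2 - x 2 * y 1), (x 1 * y 3 - x 3 * y 1), -(x 2 * y 3 - x 3 * y 2), (0:ℝ)]

/-- `D` (acting via `mulVec`) is a derivation of the bracket. -/
def IsDer (D : Matrix (Fin 4) (Fin 4) ℝ) : Prop :=
  ∀ x y : Fin 4 → ℝ, D.mulVec (br x y) = br (D.mulVec x) y + br x (D.mulVec y)

/-!
The Leibniz rule is bilinear in `(x, y)`, so it holds for all vectors as soon as it holds on
the basis pairs `(eᵢ, eⱼ)`; these give linear equations in the entries of `D` which cut out the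
derivation algebra of `𝔤` (`isDer_iff`). Among them is `D₄₄ = 0`, so in `R = η • 1 + D` the
scalar is forced to be `R₄₄`, and `R` is of that form iff `R - R₄₄ • 1` is a derivation, which
translates into the stated linear conditions on `R`. (Indices are 0-based in the code: the
paper's `R₄₄` is `R 3 3`.)
-/

theorem isDer_iff (D : Matrix (Fin 4) (Fin 4) ℝ) :
    IsDer D ↔ (D 1 0 = 0 ∧ D 1 2 = 0 ∧ D 2 0 = 0 ∧ D 2 1 = 0 ∧ D 3 0 = 0 ∧ D 3 1 = 0 ∧
      D 3 2 = 0 ∧ D 3 3 = 0 ∧ D 0 0 = D 1 1 + D 2 2 ∧ D 0 1 = D 2 3 ∧ D 0 2 = D 1 3) := by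
  constructor
  · intro h
    have h01 := h ![1, 0, 0, 0] ![0, 1, 0, 0]
    have h02 := h ![1, 0, 0, 0] ![0, 0, 1, 0]
    have h12 := h ![0, 1, 0, 0] ![0, 0, 1, 0]
    have h13 := h ![0, 1, 0, 0] ![0, 0, 0, 1]
    have h23 := h ![0, 0, 1, 0] ![0, 0, 0, 1]
    simp only [funext_iff, Fin.forall_fin_succ, IsEmpty.forall_iff, Pi.add_apply, br, mulVec,
      dotProduct, Fin.sum_univ_four, cons_val_zero, cons_val_one, cons_val, Fin.succ_zero_eq_one,
      Fin.succ_one_eq_two, Fin.reduceSucc, mul_zero, mul_one, zero_mul, one_mul, mul_neg, add_zero,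
      zero_add, sub_zero, zero_sub, sub_self, neg_zero, neg_neg, neg_inj, neg_eq_zero, zero_eq_neg,
      left_eq_add, and_self, and_true, true_and] at h01 h02 h12 h13 h23
    obtain ⟨h20, -⟩ := h01
    obtain ⟨h10, h30⟩ := h02
    obtain ⟨h00, -, -, -⟩ := h12
    obtain ⟨h01, h33, h21, h31⟩ := h13
    obtain ⟨h02, h12, -, h32⟩ := h23
    refine ⟨h10.symm, by linarith, h20, by linarith, h30.symm, h31, h32, h33, h00, h01, h02⟩
  · rintro ⟨h10, h12, h20, h21, h30, h31, h32, h33, h00, h01, h02⟩ x y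
    ext i
    fin_cases i <;>
      simp [mulVec, br, Fin.sum_univ_four, dotProduct, h10, h12, h20, h21, h30, h31, h32, h33,
        h00, h01, h02] <;>
      ring

theorem eq_of_isDer {R D : Matrix (Fin 4) (Fin 4) ℝ} {η : ℝ} (hD : IsDer D)
    (hR : R = η • 1 + D) : η = R 3 3 := by
  obtain ⟨-, -, -, -, -, -, -, h33, -⟩ := (isDer_iff D).1 hD
  simp [hR, h33]

theorem isDer_sub_smul_one_iff (R : Matrix (Fin 4) (Fin 4) ℝ) :
    IsDer (R - R 3 3 • 1) ↔
      (R 1 0 = 0 ∧ R 2 0 = 0 ∧ R 3 0 = 0 ∧ R 2 1 = 0 ∧ R 1 2 = 0 ∧ R 3 1 = 0 ∧ R 3 2 = 0 ∧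
        R 1 3 = R 0 2 ∧ R 2 3 = R 0 1 ∧ R 3 3 = R 1 1 + R 2 2 - R 0 0) := by
  simp only [isDer_iff, Matrix.sub_apply, Matrix.smul_apply, smul_eq_mul, ne_eq, Fin.reduceEq,
    not_false_eq_true, one_apply_ne, one_apply_eq, mul_zero, mul_one, sub_zero, sub_self, true_and]
  constructor
  · rintro ⟨h10, h12, h20, h21, h30, h31, h32, h00, h01, h02⟩
    exact ⟨h10, h20, h30, h21, h12, h31, h32, h02.symm, h01.symm, by linarith⟩
  · rintro ⟨h10, h20, h30, h21, h12, h31, h32, h13, h23, h33⟩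
    exact ⟨h10, h12, h20, h21, h30, h31, h32, by linarith, h23.symm, h13.symm⟩

theorem stmt_18 (R : Matrix (Fin 4) (Fin 4) ℝ) :
    ((∃ (η : ℝ) (D : Matrix (Fin 4) (Fin 4) ℝ), IsDer D ∧
        R = η • (1 : Matrix (Fin 4) (Fin 4) ℝ) + D) ↔
      (R 1 0 = 0 ∧ R 2 0 = 0 ∧ R 3 0 = 0 ∧ R 2 1 = 0 ∧ R 1 2 = 0 ∧ R 3 1 = 0 ∧ R 3 2 = 0 ∧ R 1 3 = R 0 2 ∧ R 2 3 = R 0 1 ∧ R 3 3 = R 1 1 + R 2 2 - R 0 0)) ∧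
    (∀ (η : ℝ) (D : Matrix (Fin 4) (Fin 4) ℝ), IsDer D →
      R = η • (1 : Matrix (Fin 4) (Fin 4) ℝ) + D → η = R 3 3) := by
  refine ⟨⟨?_, fun h => ⟨R 3 3, _, (isDer_sub_smul_one_iff R).2 h, by abel⟩⟩,
    fun η D hD hR => eq_of_isDer hD hR⟩
  rintro ⟨η, D, hD, hR⟩
  have hDR : D = R - R 3 3 • 1 := by
    rw [← eq_of_isDer hD hR, hR]
    abel
  exact (isDer_sub_smul_one_iff R).1 (hDR ▸ hD)
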